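/- Let K be a number field of degree n over Q and B ≥ 1 a real number. Let ω_1,…,ω_n be an LLL-reduced integral basis for O_K (with respect to the Minkowski embedding Φ). Then every x ∈ K with H_K(x) ≤ B can be written as x = (a_1 ω_1 + ⋯ + a_n ω_n)/c, where a_1,…,a_n, c are integers satisfying 1 ≤ c ≤ B and |a_i| ≤ 2^{n(n−1)/4} B c for all i. -/

import Mathlib

open NumberField IsDedekindDomain Real
open scoped nonZeroDivisors Classical

variable (K : Type*) [Field K] [NumberField K]

/-- The normalized `v`-adic absolute value `|x|_v^{n_v} = N(v)^{-ord_v(x)}` at a finite place. -/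
noncomputable def vadicAbs (v : HeightOneSpectrum (𝓞 K)) (x : K) : ℝ :=
  if hx : v.valuation K x = 0 then 0
  else (Ideal.absNorm v.asIdeal : ℝ) ^ (Multiplicative.toAdd (WithZero.unzero hx))

/-- The relative multiplicative height `H_K(x) = ∏_{v ∈ M_K} max {|x|_v^{n_v}, 1}`. -/
noncomputable def relHeight (x : K) : ℝ :=
  (∏ w : InfinitePlace K, max (w x ^ w.mult) 1) *
    ∏ᶠ v : HeightOneSpectrum (𝓞 K), max (vadicAbs K v x) 1

/-- The norm of the Minkowski embedding
`Φ(x) = (σ₁ x, …, σ_{r₁} x, √2 Re τ₁ x, √2 Im τ₁ x, …)`; it equals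
`√(∑_{φ : K →+* ℂ} |φ x|²)`. -/
noncomputable def minkowskiNorm (x : K) : ℝ :=
  Real.sqrt (∑ φ : K →+* ℂ, ‖φ x‖ ^ 2)

/-!
After clearing denominators, `y = c x` lies in `𝓞 K` with `c ≤ H_K(x)` (the finite part of the
height is the norm of the denominator ideal of `x`), and every conjugate of `x` is bounded by
`H_K(x)`, so `‖Φ(y)‖ ≤ √n c B`. By Cramer's rule the `i`-th coordinate of `y` in the basis `ω` is a
quotient of two determinants of complex embedding matrices: the denominator has absolute value
`√|Δ_K|`, and Hadamard's inequality bounds the numerator by `‖Φ(y)‖ ∏_{j ≠ i} ‖Φ(ω_j)‖`. The LLL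
conditions bound this product by `2^{n(n-1)/4} √|Δ_K| / √n`.
-/

lemma max_pow_one_eq_max_one_pow {R : Type*} [Semiring R] [LinearOrder R] [IsStrictOrderedRing R]
    {a : R} (ha : 0 ≤ a) (m : ℕ) : max (a ^ m) 1 = max a 1 ^ m := by
  rcases le_total a 1 with h | h
  · rw [max_eq_right (pow_le_one₀ ha h), max_eq_right h, one_pow]
  · rw [max_eq_left (one_le_pow₀ h), max_eq_left h]

lemma Height.apply_le_mulHeight₁ {F : Type*} [Field F] [AdmissibleAbsValues F]
    {v : AbsoluteValue F ℝ} (hv : v ∈ AdmissibleAbsValues.archAbsVal) (x : F) :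
    v x ≤ mulHeight₁ x := by
  have hprod := Multiset.mem_le_prod_of_one_le (f := fun v : AbsoluteValue F ℝ ↦ max (v x) 1)
    (fun _ ↦ le_max_right ..) hv
  calc v x ≤ max (v x) 1 := le_max_left ..
    _ ≤ _ := hprod
    _ ≤ mulHeight₁ x :=
        le_mul_of_one_le_right ((zero_le_one.trans (le_max_right ..)).trans hprod)
          (one_le_finprod fun _ ↦ le_max_right ..)

open scoped Matrix

namespace Matrix

variable {𝕜 ι : Type*} [RCLike 𝕜] [Fintype ι] [LinearOrder ι] [LocallyFiniteOrderBot ι]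
  [WellFoundedLT ι]

/-- **Hadamard's inequality**. -/
theorem norm_det_le_prod_norm_col (A : Matrix ι ι 𝕜) :
    ‖A.det‖ ≤ ∏ j, ‖WithLp.toLp 2 (fun i => A i j)‖ := by
  let f : ι → EuclideanSpace 𝕜 ι := fun j => WithLp.toLp 2 (fun i => A i j)
  have hcard : Module.finrank 𝕜 (EuclideanSpace 𝕜 ι) = Fintype.card ι := finrank_euclideanSpace
  let Q := InnerProductSpace.gramSchmidtOrthonormalBasis hcard f
  let E := EuclideanSpace.basisFun ι 𝕜
  have hA : E.toBasis.toMatrix Q.toBasis * Q.toBasis.toMatrix f = A := by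
    rw [Module.Basis.toMatrix_mul_toMatrix]
    ext i j
    simp [Module.Basis.toMatrix_apply, f, E]
  have hQ : ‖(E.toBasis.toMatrix Q.toBasis).det‖ = 1 := by
    have hU := (det_of_mem_unitary (E.toMatrix_orthonormalBasis_mem_unitary Q)).1
    rw [OrthonormalBasis.coe_toBasis]
    refine (pow_eq_one_iff_of_nonneg (norm_nonneg _) two_ne_zero).mp ?_
    simpa only [RCLike.star_def, RCLike.conj_mul, norm_pow, RCLike.norm_ofReal, abs_norm,
      norm_one] using congrArg norm hU
  calc ‖A.det‖ = ‖Q.toBasis.det f‖ := by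
        rw [← hA, det_mul, norm_mul, hQ, one_mul, Module.Basis.det_apply]
    _ = ∏ j, ‖inner 𝕜 (Q j) (f j)‖ := by
        rw [InnerProductSpace.gramSchmidtOrthonormalBasis_det, norm_prod]
    _ ≤ ∏ j, ‖f j‖ := by
        gcongr with j
        simpa [Q.orthonormal.1 j] using norm_inner_le_norm (𝕜 := 𝕜) (Q j) (f j)

theorem norm_det_mul_norm_apply_le (M : Matrix ι ι 𝕜) (a : ι → 𝕜) (i : ι) :
    ‖M.det‖ * ‖a i‖ ≤
      ‖WithLp.toLp 2 (M *ᵥ a)‖ *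
        ∏ j ∈ Finset.univ.erase i, ‖WithLp.toLp 2 (fun k => M k j)‖ := by
  have hcramer : (M.updateCol i (M *ᵥ a)).det = M.det * a i := by
    rw [← cramer_apply, cramer_eq_adjugate_mulVec, mulVec_mulVec, adjugate_mul, smul_mulVec,
      one_mulVec, Pi.smul_apply, smul_eq_mul]
  calc ‖M.det‖ * ‖a i‖ = ‖(M.updateCol i (M *ᵥ a)).det‖ := by rw [hcramer, norm_mul]
    _ ≤ _ := norm_det_le_prod_norm_col _
    _ = _ := by
      rw [← Finset.mul_prod_erase _ _ (Finset.mem_univ i)]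
      congr 1
      · simp
      · refine Finset.prod_congr rfl fun j hj => ?_
        simp [updateCol_ne (Finset.ne_of_mem_erase hj)]

end Matrix

namespace NumberField

variable {K}

lemma vadicAbs_eq_finitePlace_mk (v : HeightOneSpectrum (𝓞 K)) (x : K) :
    vadicAbs K v x = FinitePlace.mk v x := by
  rw [FinitePlace.mk_apply, FinitePlace.norm_embedding', vadicAbs]
  split_ifs with hx
  · simp [hx]
  · simp [WithZeroMulInt.toNNReal_neg_apply _ hx]

lemma relHeight_eq_mulHeight₁ (x : K) : relHeight K x = Height.mulHeight₁ x := by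
  rw [relHeight, mulHeight₁_eq, ← finprod_comp_equiv FinitePlace.equivHeightOneSpectrum.symm]
  congr 1
  · exact Finset.prod_congr rfl fun w _ ↦
      max_pow_one_eq_max_one_pow (apply_nonneg w x) w.mult
  · simp only [vadicAbs_eq_finitePlace_mk]
    rfl

lemma norm_embedding_le_mulHeight₁ (φ : K →+* ℂ) (x : K) : ‖φ x‖ ≤ Height.mulHeight₁ x :=
  Height.apply_le_mulHeight₁
    (mem_multisetInfinitePlace.mpr (InfinitePlace.mk φ).isInfinitePlace) x

lemma minkowskiNorm_nonneg (x : K) : 0 ≤ minkowskiNorm K x := Real.sqrt_nonneg _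

lemma minkowskiNorm_natCast_mul (c : ℕ) (x : K) :
    minkowskiNorm K (c * x) = c * minkowskiNorm K x := by
  simp only [minkowskiNorm, map_mul, map_natCast, norm_mul, Complex.norm_natCast, mul_pow,
    ← Finset.mul_sum]
  rw [Real.sqrt_mul (by positivity), Real.sqrt_sq c.cast_nonneg]

lemma minkowskiNorm_le_sqrt_finrank_mul_mulHeight₁ (x : K) :
    minkowskiNorm K x ≤ √(Module.finrank ℚ K) * Height.mulHeight₁ x := by
  calc minkowskiNorm K x ≤ √(∑ _φ : K →+* ℂ, Height.mulHeight₁ x ^ 2) := by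
        unfold minkowskiNorm
        gcongr with φ
        exact norm_embedding_le_mulHeight₁ φ x
    _ = √(Module.finrank ℚ K) * Height.mulHeight₁ x := by
        rw [Finset.sum_const, Finset.card_univ, Embeddings.card, nsmul_eq_mul,
          Real.sqrt_mul (Nat.cast_nonneg _), Real.sqrt_sq (Height.mulHeight₁_nonneg x)]

variable {ι : Type*} [Fintype ι]

lemma RingOfIntegers.coe_eq_sum_repr_mul {L : Type*} [Field L] (b : Module.Basis ι ℤ (𝓞 L))
    (y : 𝓞 L) : (y : L) = ∑ j, (b.repr y j : L) * b j := by
  simpa [Algebra.smul_def] using congrArg (algebraMap (𝓞 L) L) (b.sum_repr y).symm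

def embeddingMatrix (e : ι ≃ (K →+* ℂ)) (v : ι → K) : Matrix ι ι ℂ :=
  Matrix.of fun i j => e i (v j)

lemma minkowskiNorm_eq_norm (e : ι ≃ (K →+* ℂ)) (z : K) :
    minkowskiNorm K z = ‖WithLp.toLp 2 (fun i => e i z)‖ := by
  rw [minkowskiNorm, EuclideanSpace.norm_eq, ← e.sum_comp]

lemma embeddingMatrix_mulVec (e : ι ≃ (K →+* ℂ)) (v : ι → K) (a : ι → ℤ) :
    embeddingMatrix e v *ᵥ (fun j => (a j : ℂ)) = fun i => e i (∑ j, a j * v j) := by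
  ext i
  simp [embeddingMatrix, Matrix.mulVec, dotProduct, mul_comm]

lemma det_embeddingMatrix_sq [DecidableEq ι] (b : Module.Basis ι ℤ (𝓞 K))
    (e : ι ≃ (K →+* ℂ)) :
    (embeddingMatrix e fun j => (b j : K)).det ^ 2 = discr K := by
  let bQ := b.localizationLocalization ℚ ℤ⁰ K
  have h : embeddingMatrix e (fun j => (b j : K)) =
      (Algebra.embeddingsMatrixReindex ℚ ℂ bQ
        (e.trans (RingHom.equivRatAlgHom K ℂ))).transpose := by
    ext i j
    simp [embeddingMatrix, Algebra.embeddingsMatrixReindex, Algebra.embeddingsMatrix, bQ]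
  rw [h, Matrix.det_transpose, ← Algebra.discr_eq_det_embeddingsMatrixReindex_pow_two,
    Algebra.discr_localizationLocalization, ← discr_eq_discr K b]
  simp

lemma norm_det_embeddingMatrix [DecidableEq ι] (b : Module.Basis ι ℤ (𝓞 K))
    (e : ι ≃ (K →+* ℂ)) :
    ‖(embeddingMatrix e fun j => (b j : K)).det‖ = √|(discr K : ℝ)| := by
  rw [← Complex.norm_intCast, ← det_embeddingMatrix_sq b e, norm_pow,
    Real.sqrt_sq (norm_nonneg _)]

variable [LinearOrder ι] [LocallyFiniteOrderBot ι] [WellFoundedLT ι]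

lemma abs_repr_mul_sqrt_abs_discr_le (b : Module.Basis ι ℤ (𝓞 K)) (y : 𝓞 K) (i : ι) :
    |(b.repr y i : ℝ)| * √|(discr K : ℝ)| ≤
      minkowskiNorm K y * ∏ j ∈ Finset.univ.erase i, minkowskiNorm K (b j) := by
  have hcard : Fintype.card ι = Fintype.card (K →+* ℂ) := by
    rw [Embeddings.card, ← RingOfIntegers.rank, Module.finrank_eq_card_basis b]
  let e := Fintype.equivOfCardEq hcard
  have := Matrix.norm_det_mul_norm_apply_le (embeddingMatrix e fun j => (b j : K))
    (fun j => (b.repr y j : ℂ)) i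
  rw [embeddingMatrix_mulVec, ← RingOfIntegers.coe_eq_sum_repr_mul, norm_det_embeddingMatrix,
    Complex.norm_intCast] at this
  simpa [mul_comm, minkowskiNorm_eq_norm e, embeddingMatrix] using this

lemma abs_repr_mul_le_of_prod_le (b : Module.Basis ι ℤ (𝓞 K)) {C L : ℝ} (hL : 0 < L)
    (hprod : ∏ j, minkowskiNorm K (b j) ≤ C * √|(discr K : ℝ)|)
    (hlen : ∀ j, L ≤ minkowskiNorm K (b j)) (y : 𝓞 K) (i : ι) :
    |(b.repr y i : ℝ)| * L ≤ C * minkowskiNorm K y := by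
  have hD : 0 < √|(discr K : ℝ)| :=
    Real.sqrt_pos.mpr (abs_pos.mpr (by exact_mod_cast discr_ne_zero K))
  have hP : 0 ≤ minkowskiNorm K y * ∏ j ∈ Finset.univ.erase i, minkowskiNorm K (b j) :=
    mul_nonneg (minkowskiNorm_nonneg _) (Finset.prod_nonneg fun _ _ => minkowskiNorm_nonneg _)
  refine le_of_mul_le_mul_right ?_ hD
  calc |(b.repr y i : ℝ)| * L * √|(discr K : ℝ)|
        = |(b.repr y i : ℝ)| * √|(discr K : ℝ)| * L := by ring
    _ ≤ minkowskiNorm K y * (∏ j ∈ Finset.univ.erase i, minkowskiNorm K (b j)) * L :=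
        mul_le_mul_of_nonneg_right (abs_repr_mul_sqrt_abs_discr_le b y i) hL.le
    _ ≤ minkowskiNorm K y * (∏ j ∈ Finset.univ.erase i, minkowskiNorm K (b j)) *
          minkowskiNorm K (b i) := mul_le_mul_of_nonneg_left (hlen i) hP
    _ = minkowskiNorm K y * ∏ j, minkowskiNorm K (b j) := by
        rw [mul_assoc, Finset.prod_erase_mul _ _ (Finset.mem_univ i)]
    _ ≤ minkowskiNorm K y * (C * √|(discr K : ℝ)|) := by
        gcongr
        exact minkowskiNorm_nonneg _
    _ = C * minkowskiNorm K y * √|(discr K : ℝ)| := by ring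

end NumberField

theorem pethoSchmitt (n : ℕ) (hn : Module.finrank ℚ K = n)
    (B : ℝ)
    (ω : Fin n → 𝓞 K) (b : Module.Basis (Fin n) ℤ (𝓞 K)) (hb : ∀ i, b i = ω i)
    (hred : ∏ i, minkowskiNorm K (ω i : K) ≤
      2 ^ ((n * (n - 1) : ℝ) / 4) * Real.sqrt |(NumberField.discr K : ℝ)|)
    (hlen : ∀ i, Real.sqrt n ≤ minkowskiNorm K (ω i : K))
    (x : K) (hx : relHeight K x ≤ B) :
    ∃ (a : Fin n → ℤ) (c : ℤ), 1 ≤ c ∧ (c : ℝ) ≤ B ∧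
      (∀ i, (|a i| : ℝ) ≤ 2 ^ ((n * (n - 1) : ℝ) / 4) * B * c) ∧
      x = (∑ i, (a i : K) * (ω i : K)) / (c : K) := by
  obtain rfl : ⇑b = ω := funext hb
  rw [relHeight_eq_mulHeight₁] at hx
  obtain ⟨c, hc, hcx, hint⟩ := exists_nat_le_mulHeight₁ x
  let y : 𝓞 K := ⟨c * x, hint⟩
  have hsqrt_n : 0 < √(n : ℝ) := Real.sqrt_pos.mpr (by exact_mod_cast hn ▸ Module.finrank_pos)
  have hy : minkowskiNorm K y ≤ √n * (B * c) := by
    calc minkowskiNorm K y = c * minkowskiNorm K x := minkowskiNorm_natCast_mul c x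
      _ ≤ c * (√n * B) := by
        rw [← hn]
        gcongr
        exact (minkowskiNorm_le_sqrt_finrank_mul_mulHeight₁ x).trans (by gcongr)
      _ = √n * (B * c) := by ring
  refine ⟨fun i => b.repr y i, c, by omega, by exact_mod_cast hcx.trans hx, fun i => ?_, ?_⟩
  · refine le_of_mul_le_mul_right ?_ hsqrt_n
    calc |(b.repr y i : ℝ)| * √n ≤ 2 ^ ((n * (n - 1) : ℝ) / 4) * minkowskiNorm K y :=
          abs_repr_mul_le_of_prod_le b hsqrt_n hred hlen y i
      _ ≤ 2 ^ ((n * (n - 1) : ℝ) / 4) * (√n * (B * c)) := by gcongr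
      _ = 2 ^ ((n * (n - 1) : ℝ) / 4) * B * ((c : ℤ) : ℝ) * √n := by push_cast; ring
  · rw [← RingOfIntegers.coe_eq_sum_repr_mul b y, show (y : K) = c * x from rfl,
      Int.cast_natCast, mul_div_cancel_left₀ x (Nat.cast_ne_zero.mpr hc)]
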